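/- arXiv:1805.12490 — 12 statements merged into one kernel-verified Lean document; each statement's English description precedes it below -/
import Mathlib

section
/- Let n ≥ 1 and let Φ₊, Φ₋ : ℝⁿ → ℝⁿ satisfy Φ₋(Φ₊(x)) = x for all x ∈ ℝⁿ. Let P̂ : ℝⁿ × ℝⁿ → ℝ be symmetric, i.e. P̂(x,y) = P̂(y,x) for all x,y, and let p, Δ₊, Δ₋ : ℝⁿ → ℝ with Δ₊ and Δ₋ nowhere vanishing, such that for all x ∈ ℝⁿ one has P̂(x, Φ₊(x)) = p(x)/Δ₊(x) and P̂(x, Φ₋(x)) = p(x)/Δ₋(x). Then for all x ∈ ℝⁿ: Δ₋(Φ₊(x))·p(x) = Δ₊(x)·p(Φ₊(x)). (Since the Jacobian determinant of the Kahan map satisfies det dΦ_f(x) = Δ(Φ₊(x);−ε)/Δ(x;ε), this identity states that the measure dx₁∧…∧dxₙ / p(x) is invariant under Φ₊.) -/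
theorem kahan_invariant_measure_general
    (n : ℕ)
    (Φp Φm : (Fin n → ℝ) → (Fin n → ℝ))
    (hinv : ∀ x, Φm (Φp x) = x)
    (Phat : (Fin n → ℝ) → (Fin n → ℝ) → ℝ)
    (hsym : ∀ x y, Phat x y = Phat y x)
    (p Δp Δm : (Fin n → ℝ) → ℝ)
    (hΔp : ∀ x, Δp x ≠ 0) (hΔm : ∀ x, Δm x ≠ 0)
    (hPp : ∀ x, Phat x (Φp x) = p x / Δp x)
    (hPm : ∀ x, Phat x (Φm x) = p x / Δm x) :
    ∀ x, Δm (Φp x) * p x = Δp x * p (Φp x) := by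
  intro x
  have h : p x / Δp x = p (Φp x) / Δm (Φp x) :=
    calc p x / Δp x = Phat x (Φp x) := (hPp x).symm
      _ = Phat (Φp x) (Φm (Φp x)) := by rw [hsym, hinv]
      _ = p (Φp x) / Δm (Φp x) := hPm (Φp x)
  rw [div_eq_div_iff (hΔp x) (hΔm (Φp x))] at h
  linarith

/-- Theorem 1 a) (invariant measure): if there is a symmetric expression `Phat` with
`Phat x (Φ₊ x) = p x / Δ₊ x` and `Phat x (Φ₋ x) = p x / Δ₋ x`, where `Φ₋ ∘ Φ₊ = id`,
then `Δ₋(Φ₊ x) · p x = Δ₊ x · p (Φ₊ x)`, i.e. the measure `dx / p(x)` is invariant. -/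
theorem kahan_invariant_measure
    (n : ℕ) (hn : 1 ≤ n)
    (Φp Φm : (Fin n → ℝ) → (Fin n → ℝ))
    (hinv : ∀ x, Φm (Φp x) = x)
    (Phat : (Fin n → ℝ) → (Fin n → ℝ) → ℝ)
    (hsym : ∀ x y, Phat x y = Phat y x)
    (p Δp Δm : (Fin n → ℝ) → ℝ)
    (hΔp : ∀ x, Δp x ≠ 0) (hΔm : ∀ x, Δm x ≠ 0)
    (hPp : ∀ x, Phat x (Φp x) = p x / Δp x)
    (hPm : ∀ x, Phat x (Φm x) = p x / Δm x) :
    ∀ x, Δm (Φp x) * p x = Δp x * p (Φp x) :=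
  kahan_invariant_measure_general n Φp Φm hinv Phat hsym p Δp Δm hΔp hΔm hPp hPm
end

section
/- Let n ≥ 1 and let Φ₊, Φ₋ : ℝⁿ → ℝⁿ satisfy Φ₋(Φ₊(x)) = x for all x ∈ ℝⁿ. Let P̂, Q̂ : ℝⁿ × ℝⁿ → ℝ be symmetric, i.e. P̂(x,y) = P̂(y,x) and Q̂(x,y) = Q̂(y,x) for all x,y, and let p, q, Δ₊, Δ₋ : ℝⁿ → ℝ with Δ₊, Δ₋ and q nowhere vanishing, such that for all x ∈ ℝⁿ: P̂(x, Φ₊(x)) = p(x)/Δ₊(x), P̂(x, Φ₋(x)) = p(x)/Δ₋(x), Q̂(x, Φ₊(x)) = q(x)/Δ₊(x), and Q̂(x, Φ₋(x)) = q(x)/Δ₋(x). Then the function J(x) = P̂(x, Φ₊(x)) / Q̂(x, Φ₊(x)) is an integral of motion of Φ₊: for all x ∈ ℝⁿ, J(Φ₊(x)) = J(x); moreover J(x) = p(x)/q(x). -/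
/-!
Both `P̂/Q̂` along `Φ₊` and along `Φ₋` equal `p/q`, because the common denominator `Δ±` cancels.
Evaluating the `Φ₋`-version at `Φ₊ x` and using `Φ₋ (Φ₊ x) = x` together with the symmetry of
`P̂`, `Q̂` turns `J (Φ₊ x) = p (Φ₊ x) / q (Φ₊ x)` back into `P̂ (x, Φ₊ x) / Q̂ (x, Φ₊ x) = J x`.
-/

section

variable {α K : Type*} [Field K]

theorem div_along_eq_div_of_common_denominator {Φ : α → α} {P Q : α → α → K} {p q Δ : α → K}
    (hΔ : ∀ x, Δ x ≠ 0) (hP : ∀ x, P x (Φ x) = p x / Δ x) (hQ : ∀ x, Q x (Φ x) = q x / Δ x)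
    (x : α) : P x (Φ x) / Q x (Φ x) = p x / q x := by
  rw [hP, hQ, div_div_div_cancel_right₀ (hΔ x)]

theorem div_along_invariant_of_leftInverse {Φp Φm : α → α} {P Q : α → α → K} {f : α → K}
    (hinv : Function.LeftInverse Φm Φp)
    (hPsym : ∀ x y, P x y = P y x) (hQsym : ∀ x y, Q x y = Q y x)
    (hp : ∀ x, P x (Φp x) / Q x (Φp x) = f x) (hm : ∀ x, P x (Φm x) / Q x (Φm x) = f x)
    (x : α) :
    P (Φp x) (Φp (Φp x)) / Q (Φp x) (Φp (Φp x)) = P x (Φp x) / Q x (Φp x) := by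
  rw [hp, ← hm, hinv x, hPsym, hQsym]

end

theorem kahan_bilinear_fractional_integral_general
    (n : ℕ)
    (Φp Φm : (Fin n → ℝ) → (Fin n → ℝ))
    (hinv : ∀ x, Φm (Φp x) = x)
    (Phat Qhat : (Fin n → ℝ) → (Fin n → ℝ) → ℝ)
    (hPsym : ∀ x y, Phat x y = Phat y x)
    (hQsym : ∀ x y, Qhat x y = Qhat y x)
    (p q Δp Δm : (Fin n → ℝ) → ℝ)
    (hΔp : ∀ x, Δp x ≠ 0) (hΔm : ∀ x, Δm x ≠ 0)
    (hPp : ∀ x, Phat x (Φp x) = p x / Δp x)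
    (hPm : ∀ x, Phat x (Φm x) = p x / Δm x)
    (hQp : ∀ x, Qhat x (Φp x) = q x / Δp x)
    (hQm : ∀ x, Qhat x (Φm x) = q x / Δm x) :
    (∀ x, Phat (Φp x) (Φp (Φp x)) / Qhat (Φp x) (Φp (Φp x))
          = Phat x (Φp x) / Qhat x (Φp x))
    ∧ (∀ x, Phat x (Φp x) / Qhat x (Φp x) = p x / q x) := by
  have hJp := div_along_eq_div_of_common_denominator hΔp hPp hQp
  have hJm := div_along_eq_div_of_common_denominator hΔm hPm hQm
  exact ⟨div_along_invariant_of_leftInverse hinv hPsym hQsym hJp hJm, hJp⟩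

/-- Theorem 1 b) (bilinear-fractional integral): under the assumptions of part a) for
two symmetric expressions `Phat`, `Qhat`, the function `J(x) = Phat x (Φ₊ x) / Qhat x (Φ₊ x)`
is an integral of motion of `Φ₊`, and moreover `J(x) = p(x)/q(x)`. -/
theorem kahan_bilinear_fractional_integral
    (n : ℕ) (hn : 1 ≤ n)
    (Φp Φm : (Fin n → ℝ) → (Fin n → ℝ))
    (hinv : ∀ x, Φm (Φp x) = x)
    (Phat Qhat : (Fin n → ℝ) → (Fin n → ℝ) → ℝ)
    (hPsym : ∀ x y, Phat x y = Phat y x)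
    (hQsym : ∀ x y, Qhat x y = Qhat y x)
    (p q Δp Δm : (Fin n → ℝ) → ℝ)
    (hΔp : ∀ x, Δp x ≠ 0) (hΔm : ∀ x, Δm x ≠ 0) (hq : ∀ x, q x ≠ 0)
    (hPp : ∀ x, Phat x (Φp x) = p x / Δp x)
    (hPm : ∀ x, Phat x (Φm x) = p x / Δm x)
    (hQp : ∀ x, Qhat x (Φp x) = q x / Δp x)
    (hQm : ∀ x, Qhat x (Φm x) = q x / Δm x) :
    (∀ x, Phat (Φp x) (Φp (Φp x)) / Qhat (Φp x) (Φp (Φp x))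
          = Phat x (Φp x) / Qhat x (Φp x))
    ∧ (∀ x, Phat x (Φp x) / Qhat x (Φp x) = p x / q x) :=
  kahan_bilinear_fractional_integral_general n Φp Φm hinv Phat Qhat hPsym hQsym p q Δp Δm hΔp hΔm
    hPp hPm hQp hQm
end

section
/- Let ω1, ω2, ω3 ∈ ℝ and define on ℝ³ × ℝ³ the functions H1(m,p) = m1² + m2² + m3² + ω1p1² + ω2p2² + ω3p3² and H2(m,p) = ω1m1² + ω2m2² + ω3m3² − ω2ω3p1² − ω3ω1p2² − ω1ω2p3². Then H1 and H2 are in involution with respect to the Lie–Poisson bracket of e(3)*: for all (m,p) ∈ ℝ³ × ℝ³, ⟨m, ∇ₘH1 × ∇ₘH2⟩ + ⟨p, ∇ₘH1 × ∇ₚH2⟩ + ⟨p, ∇ₚH1 × ∇ₘH2⟩ = 0, where ∇ₘH1 = 2m, ∇ₚH1 = 2(ω1p1, ω2p2, ω3p3), ∇ₘH2 = 2(ω1m1, ω2m2, ω3m3), ∇ₚH2 = −2(ω2ω3p1, ω3ω1p2, ω1ω2p3), × denotes the cross product and ⟨·,·⟩ the Euclidean scalar product on ℝ³. -/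
open Matrix

/-! Up to a factor 4, the bracket of `H1 = |m|² + ⟨p, Ω p⟩` and `H2 = ⟨m, Ω m⟩ - ⟨p, adj Ω p⟩`
is `⟨m, m × Ω m⟩ + ⟨p, Ω p × Ω m⟩ - ⟨p, m × adj Ω p⟩`. The first term vanishes. Since
`A u × A v = (adj A)ᵀ (u × v)` for every `3 × 3` matrix `A`, the second is the triple product
`⟨adj Ω p, p × m⟩ = ⟨p, m × adj Ω p⟩`, which cancels the third. -/

section

variable {R : Type*} [CommRing R]

theorem mulVec_cross_mulVec (A : Matrix (Fin 3) (Fin 3) R) (u v : Fin 3 → R) :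
    (A *ᵥ u) ⨯₃ (A *ᵥ v) = (adjugate A)ᵀ *ᵥ (u ⨯₃ v) := by
  rw [adjugate_fin_three]
  ext i
  fin_cases i <;>
    simp [cross_apply, mulVec, dotProduct, Fin.sum_univ_three] <;> ring

/-- The Lie–Poisson bracket of `e(3)*` at `(m, p)` of two functions with gradients
`(dmF, dpF)` and `(dmG, dpG)`. -/
def e3Bracket (m p dmF dpF dmG dpG : Fin 3 → R) : R :=
  m ⬝ᵥ dmF ⨯₃ dmG + p ⬝ᵥ dmF ⨯₃ dpG + p ⬝ᵥ dpF ⨯₃ dmG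

theorem e3Bracket_smul_smul (m p dmF dpF dmG dpG : Fin 3 → R) (a b : R) :
    e3Bracket m p (a • dmF) (a • dpF) (b • dmG) (b • dpG) =
      (a * b) * e3Bracket m p dmF dpF dmG dpG := by
  simp only [e3Bracket, map_smul, LinearMap.smul_apply, dotProduct_smul, smul_eq_mul]
  ring

theorem e3Bracket_clebsch (A : Matrix (Fin 3) (Fin 3) R) (m p : Fin 3 → R) :
    e3Bracket m p m (A *ᵥ p) (A *ᵥ m) (-(adjugate A *ᵥ p)) = 0 := by
  have htriple : p ⬝ᵥ (A *ᵥ p) ⨯₃ (A *ᵥ m) = p ⬝ᵥ m ⨯₃ (adjugate A *ᵥ p) := by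
    rw [mulVec_cross_mulVec, dotProduct_mulVec, vecMul_transpose,
      triple_product_permutation, ← triple_product_permutation]
  rw [e3Bracket, dot_self_cross, htriple, map_neg, dotProduct_neg]
  ring

end

/-- The Hamiltonians `H1 = m₁²+m₂²+m₃²+ω₁p₁²+ω₂p₂²+ω₃p₃²` and
`H2 = ω₁m₁²+ω₂m₂²+ω₃m₃²−ω₂ω₃p₁²−ω₃ω₁p₂²−ω₁ω₂p₃²` of the first and second Clebsch
flows are in involution with respect to the Lie–Poisson bracket of `e(3)*`:
`⟨m, ∇ₘH1 × ∇ₘH2⟩ + ⟨p, ∇ₘH1 × ∇ₚH2⟩ + ⟨p, ∇ₚH1 × ∇ₘH2⟩ = 0`,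
with the gradients `∇ₘH1 = 2m`, `∇ₚH1 = 2(ω₁p₁,ω₂p₂,ω₃p₃)`,
`∇ₘH2 = 2(ω₁m₁,ω₂m₂,ω₃m₃)`, `∇ₚH2 = −2(ω₂ω₃p₁,ω₃ω₁p₂,ω₁ω₂p₃)`. -/
theorem clebsch_hamiltonians_in_involution
    (ω1 ω2 ω3 : ℝ) (m p : Fin 3 → ℝ) :
    m ⬝ᵥ (crossProduct (fun i => 2 * m i)
            ![2 * ω1 * m 0, 2 * ω2 * m 1, 2 * ω3 * m 2])
    + p ⬝ᵥ (crossProduct (fun i => 2 * m i)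
            ![-(2 * ω2 * ω3 * p 0), -(2 * ω3 * ω1 * p 1), -(2 * ω1 * ω2 * p 2)])
    + p ⬝ᵥ (crossProduct ![2 * ω1 * p 0, 2 * ω2 * p 1, 2 * ω3 * p 2]
            ![2 * ω1 * m 0, 2 * ω2 * m 1, 2 * ω3 * m 2]) = 0 := by
  set Ω : Matrix (Fin 3) (Fin 3) ℝ := diagonal ![ω1, ω2, ω3]
  have hΩ (v : Fin 3 → ℝ) : ![2 * ω1 * v 0, 2 * ω2 * v 1, 2 * ω3 * v 2] = (2 : ℝ) • Ω *ᵥ v := by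
    ext i; fin_cases i <;> simp [Ω, mulVec_diagonal] <;> ring
  have hadj : ![-(2 * ω2 * ω3 * p 0), -(2 * ω3 * ω1 * p 1), -(2 * ω1 * ω2 * p 2)] =
      (2 : ℝ) • -(adjugate Ω *ᵥ p) := by
    rw [adjugate_fin_three]
    ext i; fin_cases i <;> simp [Ω, dotProduct, Fin.sum_univ_three] <;> ring
  have h2m : (fun i => 2 * m i) = (2 : ℝ) • m := rfl
  rw [hΩ, hΩ, hadj, h2m]
  change e3Bracket m p (2 • m) (2 • Ω *ᵥ p) (2 • Ω *ᵥ m) (2 • -(adjugate Ω *ᵥ p)) = 0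
  rw [e3Bracket_smul_smul, e3Bracket_clebsch, mul_zero]
end

section
/- Let a1, a2, a3 be nonzero reals and b1, b2, b3 ∈ ℝ. Consider the general Clebsch vector field on ℝ³ × ℝ³: ṁ1 = (a3−a2)m2m3 + (b3−b2)p2p3, ṁ2 = (a1−a3)m3m1 + (b1−b3)p3p1, ṁ3 = (a2−a1)m1m2 + (b2−b1)p1p2, ṗ1 = a3m3p2 − a2m2p3, ṗ2 = a1m1p3 − a3m3p1, ṗ3 = a2m2p1 − a1m1p2. Then the following are equivalent: (i) the Clebsch condition (b1−b2)/a3 + (b2−b3)/a1 + (b3−b1)/a2 = 0 holds; (ii) there exist constants (A1,A2,A3) ≠ (0,0,0) such that for all (m,p) ∈ ℝ³ × ℝ³, A1(ṁ1p1 − m1ṗ1) + A2(ṁ2p2 − m2ṗ2) + A3(ṁ3p3 − m3ṗ3) = 0. Moreover, any such (A1,A2,A3) is a scalar multiple of (1/a2 + 1/a3 − 1/a1, 1/a3 + 1/a1 − 1/a2, 1/a1 + 1/a2 − 1/a3). -/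
/-!
Expanding the Wronskian along the Clebsch vector field leaves four monomials,
`m₂m₃p₁`, `m₃m₁p₂`, `m₁m₂p₃` and `p₁p₂p₃`. The first three coefficients vanish exactly
when `a₁(A₂+A₃) = a₂(A₃+A₁) = a₃(A₁+A₂)`, which for nonzero `aᵢ` pins `A` down to a
multiple `t • v` of `v = (1/a₂+1/a₃−1/a₁, 1/a₃+1/a₁−1/a₂, 1/a₁+1/a₂−1/a₃)`. The
coefficient of `p₁p₂p₃` is then `2t` times the Clebsch expression, so a nonzero
relation (`t ≠ 0`) exists iff the Clebsch condition holds.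
-/

section ClebschWronskian

variable (a1 a2 a3 b1 b2 b3 : ℝ)

def clebschWronskian (A1 A2 A3 m1 m2 m3 p1 p2 p3 : ℝ) : ℝ :=
  A1 * (((a3 - a2) * m2 * m3 + (b3 - b2) * p2 * p3) * p1
        - m1 * (a3 * m3 * p2 - a2 * m2 * p3))
  + A2 * (((a1 - a3) * m3 * m1 + (b1 - b3) * p3 * p1) * p2
        - m2 * (a1 * m1 * p3 - a3 * m3 * p1))
  + A3 * (((a2 - a1) * m1 * m2 + (b2 - b1) * p1 * p2) * p3
        - m3 * (a2 * m2 * p1 - a1 * m1 * p2))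

theorem clebschWronskian_eq (A1 A2 A3 m1 m2 m3 p1 p2 p3 : ℝ) :
    clebschWronskian a1 a2 a3 b1 b2 b3 A1 A2 A3 m1 m2 m3 p1 p2 p3 =
      (a3 * (A1 + A2) - a2 * (A3 + A1)) * (m2 * m3 * p1)
      + (a1 * (A2 + A3) - a3 * (A1 + A2)) * (m3 * m1 * p2)
      + (a2 * (A3 + A1) - a1 * (A2 + A3)) * (m1 * m2 * p3)
      + (A1 * (b3 - b2) + A2 * (b1 - b3) + A3 * (b2 - b1)) * (p1 * p2 * p3) := by
  unfold clebschWronskian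
  ring

theorem forall_clebschWronskian_eq_zero_iff (A1 A2 A3 : ℝ) :
    (∀ m1 m2 m3 p1 p2 p3 : ℝ,
        clebschWronskian a1 a2 a3 b1 b2 b3 A1 A2 A3 m1 m2 m3 p1 p2 p3 = 0) ↔
      a1 * (A2 + A3) = a2 * (A3 + A1) ∧ a2 * (A3 + A1) = a3 * (A1 + A2) ∧
        A1 * (b3 - b2) + A2 * (b1 - b3) + A3 * (b2 - b1) = 0 := by
  simp only [clebschWronskian_eq]
  constructor
  · intro h
    have h1 := h 0 1 1 1 0 0
    have h3 := h 1 1 0 0 0 1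
    have h0 := h 0 0 0 1 1 1
    exact ⟨by linear_combination -h3, by linear_combination -h1, by linear_combination h0⟩
  · rintro ⟨h12, h23, hb⟩ m1 m2 m3 p1 p2 p3
    linear_combination (m3 * m1 * p2 - m1 * m2 * p3) * h12
      + (m3 * m1 * p2 - m2 * m3 * p1) * h23 + p1 * p2 * p3 * hb

end ClebschWronskian

theorem mul_add_eq_mul_add_iff_exists_eq_mul {a1 a2 a3 : ℝ}
    (ha1 : a1 ≠ 0) (ha2 : a2 ≠ 0) (ha3 : a3 ≠ 0) (A1 A2 A3 : ℝ) :
    (a1 * (A2 + A3) = a2 * (A3 + A1) ∧ a2 * (A3 + A1) = a3 * (A1 + A2)) ↔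
      ∃ t : ℝ, A1 = t * (1 / a2 + 1 / a3 - 1 / a1)
             ∧ A2 = t * (1 / a3 + 1 / a1 - 1 / a2)
             ∧ A3 = t * (1 / a1 + 1 / a2 - 1 / a3) := by
  constructor
  · rintro ⟨h12, h23⟩
    refine ⟨a1 * (A2 + A3) / 2, ?_, ?_, ?_⟩ <;> field_simp
    · linear_combination -a3 * h12 - a2 * (h12 + h23)
    · linear_combination a3 * h12 - a2 * (h12 + h23)
    · linear_combination -a3 * h12 + a2 * (h12 + h23)
  · rintro ⟨t, rfl, rfl, rfl⟩
    constructor <;> field_simp <;> ring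

theorem clebschDirection_ne_zero {a1 a2 a3 : ℝ} (ha3 : a3 ≠ 0) :
    (1 / a2 + 1 / a3 - 1 / a1, 1 / a3 + 1 / a1 - 1 / a2, 1 / a1 + 1 / a2 - 1 / a3) ≠
      ((0, 0, 0) : ℝ × ℝ × ℝ) := by
  intro h
  simp only [Prod.mk.injEq] at h
  have : 2 / a3 = 0 := by linear_combination h.1 + h.2.1
  simp_all

theorem clebschDirection_pairing (a1 a2 a3 b1 b2 b3 t : ℝ) :
    t * (1 / a2 + 1 / a3 - 1 / a1) * (b3 - b2) + t * (1 / a3 + 1 / a1 - 1 / a2) * (b1 - b3)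
        + t * (1 / a1 + 1 / a2 - 1 / a3) * (b2 - b1) =
      2 * t * ((b1 - b2) / a3 + (b2 - b3) / a1 + (b3 - b1) / a2) := by
  ring

theorem forall_clebschWronskian_eq_zero_iff_exists {a1 a2 a3 : ℝ} (b1 b2 b3 : ℝ)
    (ha1 : a1 ≠ 0) (ha2 : a2 ≠ 0) (ha3 : a3 ≠ 0) (A1 A2 A3 : ℝ) :
    (∀ m1 m2 m3 p1 p2 p3 : ℝ,
        clebschWronskian a1 a2 a3 b1 b2 b3 A1 A2 A3 m1 m2 m3 p1 p2 p3 = 0) ↔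
      ∃ t : ℝ, A1 = t * (1 / a2 + 1 / a3 - 1 / a1)
             ∧ A2 = t * (1 / a3 + 1 / a1 - 1 / a2)
             ∧ A3 = t * (1 / a1 + 1 / a2 - 1 / a3)
             ∧ t * ((b1 - b2) / a3 + (b2 - b3) / a1 + (b3 - b1) / a2) = 0 := by
  rw [forall_clebschWronskian_eq_zero_iff, ← and_assoc,
    mul_add_eq_mul_add_iff_exists_eq_mul ha1 ha2 ha3]
  constructor
  · rintro ⟨⟨t, rfl, rfl, rfl⟩, hb⟩
    refine ⟨t, rfl, rfl, rfl, ?_⟩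
    linear_combination (1 / 2 : ℝ) * (clebschDirection_pairing a1 a2 a3 b1 b2 b3 t).symm
      + (1 / 2 : ℝ) * hb
  · rintro ⟨t, rfl, rfl, rfl, htC⟩
    refine ⟨⟨t, rfl, rfl, rfl⟩, ?_⟩
    rw [clebschDirection_pairing]
    linear_combination 2 * htC
/-- For the general Clebsch vector field, the Clebsch condition
`(b1−b2)/a3 + (b2−b3)/a1 + (b3−b1)/a2 = 0` is equivalent to the existence of a
nontrivial Wronskian relation `∑ Aᵢ(ṁᵢpᵢ − mᵢṗᵢ) = 0` with constant coefficients;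
moreover any such triple `(A1,A2,A3)` is proportional to
`(1/a2+1/a3−1/a1, 1/a3+1/a1−1/a2, 1/a1+1/a2−1/a3)`. -/
theorem clebsch_condition_iff_wronskian_relation
    (a1 a2 a3 b1 b2 b3 : ℝ) (ha1 : a1 ≠ 0) (ha2 : a2 ≠ 0) (ha3 : a3 ≠ 0) :
    ((b1 - b2) / a3 + (b2 - b3) / a1 + (b3 - b1) / a2 = 0 ↔
      ∃ A1 A2 A3 : ℝ, (A1, A2, A3) ≠ (0, 0, 0) ∧
        ∀ m1 m2 m3 p1 p2 p3 : ℝ,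
          A1 * (((a3 - a2) * m2 * m3 + (b3 - b2) * p2 * p3) * p1
                - m1 * (a3 * m3 * p2 - a2 * m2 * p3))
          + A2 * (((a1 - a3) * m3 * m1 + (b1 - b3) * p3 * p1) * p2
                - m2 * (a1 * m1 * p3 - a3 * m3 * p1))
          + A3 * (((a2 - a1) * m1 * m2 + (b2 - b1) * p1 * p2) * p3
                - m3 * (a2 * m2 * p1 - a1 * m1 * p2)) = 0)
    ∧ (∀ A1 A2 A3 : ℝ, (A1, A2, A3) ≠ (0, 0, 0) →
        (∀ m1 m2 m3 p1 p2 p3 : ℝ,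
          A1 * (((a3 - a2) * m2 * m3 + (b3 - b2) * p2 * p3) * p1
                - m1 * (a3 * m3 * p2 - a2 * m2 * p3))
          + A2 * (((a1 - a3) * m3 * m1 + (b1 - b3) * p3 * p1) * p2
                - m2 * (a1 * m1 * p3 - a3 * m3 * p1))
          + A3 * (((a2 - a1) * m1 * m2 + (b2 - b1) * p1 * p2) * p3
                - m3 * (a2 * m2 * p1 - a1 * m1 * p2)) = 0) →
        ∃ t : ℝ, A1 = t * (1 / a2 + 1 / a3 - 1 / a1)
               ∧ A2 = t * (1 / a3 + 1 / a1 - 1 / a2)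
               ∧ A3 = t * (1 / a1 + 1 / a2 - 1 / a3)) := by
  have hW := forall_clebschWronskian_eq_zero_iff_exists b1 b2 b3 ha1 ha2 ha3
  refine ⟨⟨fun hC => ?_, fun ⟨A1, A2, A3, hA, hrel⟩ => ?_⟩, fun A1 A2 A3 _ hrel => ?_⟩
  · refine ⟨1 / a2 + 1 / a3 - 1 / a1, 1 / a3 + 1 / a1 - 1 / a2, 1 / a1 + 1 / a2 - 1 / a3,
      clebschDirection_ne_zero ha3, (hW _ _ _).2 ⟨1, ?_, ?_, ?_, ?_⟩⟩ <;> simp [hC]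
  · obtain ⟨t, rfl, rfl, rfl, htC⟩ := (hW A1 A2 A3).1 hrel
    have ht : t ≠ 0 := by
      rintro rfl
      simp at hA
    exact (mul_eq_zero.1 htC).resolve_left ht
  · obtain ⟨t, h1, h2, h3, -⟩ := (hW A1 A2 A3).1 hrel
    exact ⟨t, h1, h2, h3⟩
end

section
/- Suppose (m,p) and (m̃,p̃) are KHK-related for the Clebsch system with the Clebsch condition (β ≠ 0). Define N(m,p) = A1a2a3·g1(m,p) + A2a3a1·g2(m,p) + A3a1a2·g3(m,p) and D(m,p) = 1 + ε²(a1a2a3/β)(g1(m,p) + g2(m,p) + g3(m,p)). Then N(m̃,p̃)·D(m,p) = N(m,p)·D(m̃,p̃); that is, the quadratic-fractional function I0 = N/D is an integral of motion of the Kahan–Hirota–Kimura discretization of the Clebsch system. -/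
/-- `(m,p)` and `(n,q)` are KHK-related for the general Clebsch system. -/
def ClebschKHK (ε a1 a2 a3 b1 b2 b3 m1 m2 m3 p1 p2 p3 n1 n2 n3 q1 q2 q3 : ℝ) : Prop :=
  n1 - m1 = ε * (a3 - a2) * (n2 * m3 + m2 * n3) + ε * (b3 - b2) * (q2 * p3 + p2 * q3) ∧
  n2 - m2 = ε * (a1 - a3) * (n3 * m1 + m3 * n1) + ε * (b1 - b3) * (q3 * p1 + p3 * q1) ∧
  n3 - m3 = ε * (a2 - a1) * (n1 * m2 + m1 * n2) + ε * (b2 - b1) * (q1 * p2 + p1 * q2) ∧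
  q1 - p1 = ε * a3 * (n3 * p2 + m3 * q2) - ε * a2 * (n2 * p3 + m2 * q3) ∧
  q2 - p2 = ε * a1 * (n1 * p3 + m1 * q3) - ε * a3 * (n3 * p1 + m3 * q1) ∧
  q3 - p3 = ε * a2 * (n2 * p1 + m2 * q1) - ε * a1 * (n1 * p2 + m1 * q2)

/-- The Clebsch condition, parametrized by `β ≠ 0`. -/
def ClebschCond (β a1 a2 a3 b1 b2 b3 : ℝ) : Prop :=
  b1 - b2 = a3 * (a1 - a2) / β ∧ b2 - b3 = a1 * (a2 - a3) / β ∧ b3 - b1 = a2 * (a3 - a1) / β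

noncomputable def cA1 (a1 a2 a3 : ℝ) : ℝ := 1 / a2 + 1 / a3 - 1 / a1
noncomputable def cA2 (a1 a2 a3 : ℝ) : ℝ := 1 / a3 + 1 / a1 - 1 / a2
noncomputable def cA3 (a1 a2 a3 : ℝ) : ℝ := 1 / a1 + 1 / a2 - 1 / a3

/-- `g₁(m,p) = p₁² + (βa₁/(a₂a₃))m₁²` and cyclic analogues. -/
noncomputable def cg1 (β a1 a2 a3 m1 p1 : ℝ) : ℝ := p1 ^ 2 + (β * a1 / (a2 * a3)) * m1 ^ 2
noncomputable def cg2 (β a1 a2 a3 m2 p2 : ℝ) : ℝ := p2 ^ 2 + (β * a2 / (a3 * a1)) * m2 ^ 2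
noncomputable def cg3 (β a1 a2 a3 m3 p3 : ℝ) : ℝ := p3 ^ 2 + (β * a3 / (a1 * a2)) * m3 ^ 2

/-- `G₁ = p₁p̃₁ + (βa₁/(a₂a₃))m₁m̃₁` and cyclic analogues. -/
noncomputable def cG1 (β a1 a2 a3 m1 p1 n1 q1 : ℝ) : ℝ := p1 * q1 + (β * a1 / (a2 * a3)) * m1 * n1
noncomputable def cG2 (β a1 a2 a3 m2 p2 n2 q2 : ℝ) : ℝ := p2 * q2 + (β * a2 / (a3 * a1)) * m2 * n2
noncomputable def cG3 (β a1 a2 a3 m3 p3 n3 q3 : ℝ) : ℝ := p3 * q3 + (β * a3 / (a1 * a2)) * m3 * n3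

/-!
Under the Clebsch condition `bₖ - bⱼ = aᵢ (aₖ - aⱼ) / β` the `m`-equations of the KHK map become
`β (m̃ᵢ - mᵢ) = ε (aₖ - aⱼ) (β (m̃ⱼmₖ + mⱼm̃ₖ) + aᵢ (p̃ⱼpₖ + pⱼp̃ₖ))`, with no `b` left. Clearing
denominators, `N' = a₁a₂a₃ N` and `D' = β D` are polynomials and the claim becomes
`N'(m̃,p̃) D'(m,p) = N'(m,p) D'(m̃,p̃)`. This identity lies in the ideal generated by the six KHK
relations: the multiplier of the relation for `m̃ᵢ` (resp. `p̃ᵢ`) is the partial derivative of `N'`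
in `mᵢ` (resp. `β` times that in `pᵢ`) at the midpoint of `(m,p)` and `(m̃,p̃)`, plus an `O(ε)`
correction that is antisymmetric under `(m,p) ↔ (m̃,p̃)`.
-/

def ClebschCaseKHK (ε β a1 a2 a3 m1 m2 m3 p1 p2 p3 n1 n2 n3 q1 q2 q3 : ℝ) : Prop :=
  β * (n1 - m1) = ε * (a3 - a2) * (β * (n2 * m3 + m2 * n3) + a1 * (q2 * p3 + p2 * q3)) ∧
  β * (n2 - m2) = ε * (a1 - a3) * (β * (n3 * m1 + m3 * n1) + a2 * (q3 * p1 + p3 * q1)) ∧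
  β * (n3 - m3) = ε * (a2 - a1) * (β * (n1 * m2 + m1 * n2) + a3 * (q1 * p2 + p1 * q2)) ∧
  q1 - p1 = ε * a3 * (n3 * p2 + m3 * q2) - ε * a2 * (n2 * p3 + m2 * q3) ∧
  q2 - p2 = ε * a1 * (n1 * p3 + m1 * q3) - ε * a3 * (n3 * p1 + m3 * q1) ∧
  q3 - p3 = ε * a2 * (n2 * p1 + m2 * q1) - ε * a1 * (n1 * p2 + m1 * q2)

theorem ClebschKHK.clebschCaseKHK {ε β a1 a2 a3 b1 b2 b3 m1 m2 m3 p1 p2 p3 n1 n2 n3 q1 q2 q3 : ℝ}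
    (hβ : β ≠ 0) (hcond : ClebschCond β a1 a2 a3 b1 b2 b3)
    (hK : ClebschKHK ε a1 a2 a3 b1 b2 b3 m1 m2 m3 p1 p2 p3 n1 n2 n3 q1 q2 q3) :
    ClebschCaseKHK ε β a1 a2 a3 m1 m2 m3 p1 p2 p3 n1 n2 n3 q1 q2 q3 := by
  obtain ⟨h1, h2, h3, h4, h5, h6⟩ := hK
  obtain ⟨hb12, hb23, hb31⟩ := hcond
  rw [eq_div_iff hβ] at hb12 hb23 hb31
  refine ⟨?_, ?_, ?_, h4, h5, h6⟩
  · linear_combination β * h1 - ε * (q2 * p3 + p2 * q3) * hb23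
  · linear_combination β * h2 - ε * (q3 * p1 + p3 * q1) * hb31
  · linear_combination β * h3 - ε * (q1 * p2 + p1 * q2) * hb12

def clebschNum (β a1 a2 a3 m1 m2 m3 p1 p2 p3 : ℝ) : ℝ :=
  (a1 * a2 + a1 * a3 - a2 * a3) * (a2 * a3 * p1 ^ 2 + β * a1 * m1 ^ 2)
    + (a2 * a3 + a2 * a1 - a3 * a1) * (a3 * a1 * p2 ^ 2 + β * a2 * m2 ^ 2)
    + (a3 * a1 + a3 * a2 - a1 * a2) * (a1 * a2 * p3 ^ 2 + β * a3 * m3 ^ 2)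

def clebschDen (ε β a1 a2 a3 m1 m2 m3 p1 p2 p3 : ℝ) : ℝ :=
  β + ε ^ 2 * (a1 * a2 * a3 * (p1 ^ 2 + p2 ^ 2 + p3 ^ 2)
    + β * ((a1 * m1) ^ 2 + (a2 * m2) ^ 2 + (a3 * m3) ^ 2))

theorem sum_cA_mul_cg_eq_clebschNum_div {β a1 a2 a3 : ℝ} (ha1 : a1 ≠ 0) (ha2 : a2 ≠ 0)
    (ha3 : a3 ≠ 0) (m1 m2 m3 p1 p2 p3 : ℝ) :
    cA1 a1 a2 a3 * a2 * a3 * cg1 β a1 a2 a3 m1 p1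
      + cA2 a1 a2 a3 * a3 * a1 * cg2 β a1 a2 a3 m2 p2
      + cA3 a1 a2 a3 * a1 * a2 * cg3 β a1 a2 a3 m3 p3
      = clebschNum β a1 a2 a3 m1 m2 m3 p1 p2 p3 / (a1 * a2 * a3) := by
  simp only [cA1, cA2, cA3, cg1, cg2, cg3, clebschNum]
  field_simp
  ring

theorem one_add_sq_mul_sum_cg_eq_clebschDen_div {β a1 a2 a3 : ℝ} (hβ : β ≠ 0) (ha1 : a1 ≠ 0)
    (ha2 : a2 ≠ 0) (ha3 : a3 ≠ 0) (ε m1 m2 m3 p1 p2 p3 : ℝ) :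
    1 + ε ^ 2 * (a1 * a2 * a3 / β)
        * (cg1 β a1 a2 a3 m1 p1 + cg2 β a1 a2 a3 m2 p2 + cg3 β a1 a2 a3 m3 p3)
      = clebschDen ε β a1 a2 a3 m1 m2 m3 p1 p2 p3 / β := by
  simp only [cg1, cg2, cg3, clebschDen]
  field_simp
  ring

theorem ClebschCaseKHK.clebschNum_mul_clebschDen_eq
    {ε β a1 a2 a3 m1 m2 m3 p1 p2 p3 n1 n2 n3 q1 q2 q3 : ℝ}
    (hK : ClebschCaseKHK ε β a1 a2 a3 m1 m2 m3 p1 p2 p3 n1 n2 n3 q1 q2 q3) :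
    clebschNum β a1 a2 a3 n1 n2 n3 q1 q2 q3 * clebschDen ε β a1 a2 a3 m1 m2 m3 p1 p2 p3
      = clebschNum β a1 a2 a3 m1 m2 m3 p1 p2 p3 * clebschDen ε β a1 a2 a3 n1 n2 n3 q1 q2 q3 := by
  obtain ⟨h1, h2, h3, h4, h5, h6⟩ := hK
  unfold clebschNum clebschDen
  linear_combination
    (a1 * a2 + a1 * a3 - a2 * a3) * (β * a1 * (m1 + n1)
      - ε * (a1 * a2 * a3 * (q3 * p2 - q2 * p3) + β * a2 * a3 * (n3 * m2 - n2 * m3))) * h1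
    + (a2 * a3 + a2 * a1 - a3 * a1) * (β * a2 * (m2 + n2)
      - ε * (a1 * a2 * a3 * (q1 * p3 - q3 * p1) + β * a3 * a1 * (n1 * m3 - n3 * m1))) * h2
    + (a3 * a1 + a3 * a2 - a1 * a2) * (β * a3 * (m3 + n3)
      - ε * (a1 * a2 * a3 * (q2 * p1 - q1 * p2) + β * a1 * a2 * (n2 * m1 - n1 * m2))) * h3
    + β * (a1 * a2 + a1 * a3 - a2 * a3) * (a2 * a3 * (p1 + q1)
      + ε * a1 * (a2 - a3) * (a3 * (p2 * n3 - m3 * q2) + a2 * (p3 * n2 - m2 * q3))) * h4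
    + β * (a2 * a3 + a2 * a1 - a3 * a1) * (a3 * a1 * (p2 + q2)
      + ε * a2 * (a3 - a1) * (a1 * (p3 * n1 - m1 * q3) + a3 * (p1 * n3 - m3 * q1))) * h5
    + β * (a3 * a1 + a3 * a2 - a1 * a2) * (a1 * a2 * (p3 + q3)
      + ε * a3 * (a1 - a2) * (a2 * (p1 * n2 - m2 * q1) + a1 * (p2 * n1 - m1 * q2))) * h6

/-- Quadratic-fractional integral `I₀ = (∑ Aᵢaⱼaₖ gᵢ)/(1 + ε²(a₁a₂a₃/β)(g₁+g₂+g₃))`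
of the KHK discretization of the Clebsch system (Theorem 3). -/
theorem clebsch_quadratic_fractional_integral
    (ε β a1 a2 a3 b1 b2 b3 : ℝ) (hβ : β ≠ 0)
    (ha1 : a1 ≠ 0) (ha2 : a2 ≠ 0) (ha3 : a3 ≠ 0)
    (hcond : ClebschCond β a1 a2 a3 b1 b2 b3)
    (m1 m2 m3 p1 p2 p3 n1 n2 n3 q1 q2 q3 : ℝ)
    (hK : ClebschKHK ε a1 a2 a3 b1 b2 b3 m1 m2 m3 p1 p2 p3 n1 n2 n3 q1 q2 q3) :
    (cA1 a1 a2 a3 * a2 * a3 * cg1 β a1 a2 a3 n1 q1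
      + cA2 a1 a2 a3 * a3 * a1 * cg2 β a1 a2 a3 n2 q2
      + cA3 a1 a2 a3 * a1 * a2 * cg3 β a1 a2 a3 n3 q3)
    * (1 + ε ^ 2 * (a1 * a2 * a3 / β)
        * (cg1 β a1 a2 a3 m1 p1 + cg2 β a1 a2 a3 m2 p2 + cg3 β a1 a2 a3 m3 p3))
    = (cA1 a1 a2 a3 * a2 * a3 * cg1 β a1 a2 a3 m1 p1
      + cA2 a1 a2 a3 * a3 * a1 * cg2 β a1 a2 a3 m2 p2
      + cA3 a1 a2 a3 * a1 * a2 * cg3 β a1 a2 a3 m3 p3)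
    * (1 + ε ^ 2 * (a1 * a2 * a3 / β)
        * (cg1 β a1 a2 a3 n1 q1 + cg2 β a1 a2 a3 n2 q2 + cg3 β a1 a2 a3 n3 q3)) := by
  have hcase := hK.clebschCaseKHK hβ hcond
  simp only [sum_cA_mul_cg_eq_clebschNum_div ha1 ha2 ha3,
    one_add_sq_mul_sum_cg_eq_clebschDen_div hβ ha1 ha2 ha3]
  rw [div_mul_div_comm, div_mul_div_comm, hcase.clebschNum_mul_clebschDen_eq]
end

section
/- Suppose (m,p) and (m̃,p̃) are KHK-related for the first Clebsch flow. Then (p̃1² + p̃2² + p̃3²)·(1 − ε²(ω1p1² + ω2p2² + ω3p3²)) = (p1² + p2² + p3²)·(1 − ε²(ω1p̃1² + ω2p̃2² + ω3p̃3²)); that is, the quadratic-fractional function I0(m,p) = (p1²+p2²+p3²)/(1 − ε²(ω1p1²+ω2p2²+ω3p3²)) is an integral of motion of the Kahan–Hirota–Kimura discretization of the first Clebsch flow. -/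
/-!
In vector form the KHK equations read `p̃ - p = ε (p × m̃ + p̃ × m)` and
`m̃ - m = ε W(p, p̃)` with `W₁ = (ω₃ - ω₂)(p̃₂p₃ + p₂p̃₃)` etc. Dotting the first with `p̃ + p`
gives `|p̃|² - |p|² = ε (m̃ - m) · (p̃ × p)`, and substituting the second turns the right-hand side
into `ε² (|p̃|² ⟨ω, p²⟩ - |p|² ⟨ω, p̃²⟩)`, which is the conservation law cleared of denominators.
-/

/-- `(m,p)` and `(n,q)` are KHK-related for the first Clebsch flow. -/
def Clebsch1KHK (ε ω1 ω2 ω3 m1 m2 m3 p1 p2 p3 n1 n2 n3 q1 q2 q3 : ℝ) : Prop :=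
  n1 - m1 = ε * (ω3 - ω2) * (q2 * p3 + p2 * q3) ∧
  n2 - m2 = ε * (ω1 - ω3) * (q3 * p1 + p3 * q1) ∧
  n3 - m3 = ε * (ω2 - ω1) * (q1 * p2 + p1 * q2) ∧
  q1 - p1 = ε * (n3 * p2 + m3 * q2) - ε * (n2 * p3 + m2 * q3) ∧
  q2 - p2 = ε * (n1 * p3 + m1 * q3) - ε * (n3 * p1 + m3 * q1) ∧
  q3 - p3 = ε * (n2 * p1 + m2 * q1) - ε * (n1 * p2 + m1 * q2)

section KahanClebsch

variable {R : Type*} [CommRing R]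

theorem sum_sq_sub_sum_sq_eq_of_kahan_rotation (ε m1 m2 m3 p1 p2 p3 n1 n2 n3 q1 q2 q3 : R)
    (h1 : q1 - p1 = ε * (n3 * p2 + m3 * q2) - ε * (n2 * p3 + m2 * q3))
    (h2 : q2 - p2 = ε * (n1 * p3 + m1 * q3) - ε * (n3 * p1 + m3 * q1))
    (h3 : q3 - p3 = ε * (n2 * p1 + m2 * q1) - ε * (n1 * p2 + m1 * q2)) :
    (q1 ^ 2 + q2 ^ 2 + q3 ^ 2) - (p1 ^ 2 + p2 ^ 2 + p3 ^ 2)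
      = ε * ((n1 - m1) * (q2 * p3 - q3 * p2) + (n2 - m2) * (q3 * p1 - q1 * p3)
          + (n3 - m3) * (q1 * p2 - q2 * p1)) := by
  linear_combination (q1 + p1) * h1 + (q2 + p2) * h2 + (q3 + p3) * h3

theorem kahan_increment_dot_cross_eq (ε ω1 ω2 ω3 m1 m2 m3 p1 p2 p3 n1 n2 n3 q1 q2 q3 : R)
    (h1 : n1 - m1 = ε * (ω3 - ω2) * (q2 * p3 + p2 * q3))
    (h2 : n2 - m2 = ε * (ω1 - ω3) * (q3 * p1 + p3 * q1))
    (h3 : n3 - m3 = ε * (ω2 - ω1) * (q1 * p2 + p1 * q2)) :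
    (n1 - m1) * (q2 * p3 - q3 * p2) + (n2 - m2) * (q3 * p1 - q1 * p3)
        + (n3 - m3) * (q1 * p2 - q2 * p1)
      = ε * ((q1 ^ 2 + q2 ^ 2 + q3 ^ 2) * (ω1 * p1 ^ 2 + ω2 * p2 ^ 2 + ω3 * p3 ^ 2)
          - (p1 ^ 2 + p2 ^ 2 + p3 ^ 2) * (ω1 * q1 ^ 2 + ω2 * q2 ^ 2 + ω3 * q3 ^ 2)) := by
  linear_combination (q2 * p3 - q3 * p2) * h1 + (q3 * p1 - q1 * p3) * h2
    + (q1 * p2 - q2 * p1) * h3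

end KahanClebsch

/-- Quadratic-fractional integral of the KHK discretization of the first Clebsch flow
(Theorem 8): `I₀ = (p₁²+p₂²+p₃²)/(1 − ε²(ω₁p₁²+ω₂p₂²+ω₃p₃²))` is conserved. -/
theorem clebsch1_quadratic_fractional_integral
    (ε ω1 ω2 ω3 m1 m2 m3 p1 p2 p3 n1 n2 n3 q1 q2 q3 : ℝ)
    (hK : Clebsch1KHK ε ω1 ω2 ω3 m1 m2 m3 p1 p2 p3 n1 n2 n3 q1 q2 q3) :
    (q1 ^ 2 + q2 ^ 2 + q3 ^ 2)
      * (1 - ε ^ 2 * (ω1 * p1 ^ 2 + ω2 * p2 ^ 2 + ω3 * p3 ^ 2))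
    = (p1 ^ 2 + p2 ^ 2 + p3 ^ 2)
      * (1 - ε ^ 2 * (ω1 * q1 ^ 2 + ω2 * q2 ^ 2 + ω3 * q3 ^ 2)) := by
  obtain ⟨hm1, hm2, hm3, hp1, hp2, hp3⟩ := hK
  have h_norm := sum_sq_sub_sum_sq_eq_of_kahan_rotation ε m1 m2 m3 p1 p2 p3 n1 n2 n3 q1 q2 q3
    hp1 hp2 hp3
  have h_dot := kahan_increment_dot_cross_eq ε ω1 ω2 ω3 m1 m2 m3 p1 p2 p3 n1 n2 n3 q1 q2 q3
    hm1 hm2 hm3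
  linear_combination h_norm + ε * h_dot
end

section
/- Suppose (m,p), (m̃,p̃) are KHK-related for the first Clebsch flow, and (m̃,p̃), (m̿,p̿) are also KHK-related. Then (p1p̃1 + p2p̃2 + p3p̃3)·(1 + ε²(ω1p̃1p̿1 + ω2p̃2p̿2 + ω3p̃3p̿3)) = (p̃1p̿1 + p̃2p̿2 + p̃3p̿3)·(1 + ε²(ω1p1p̃1 + ω2p2p̃2 + ω3p3p̃3)); that is, the bilinear-fractional function J0 = (p1p̃1+p2p̃2+p3p̃3)/(1 + ε²(ω1p1p̃1+ω2p2p̃2+ω3p3p̃3)) is an integral of motion of the Kahan–Hirota–Kimura discretization of the first Clebsch flow. -/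
open Matrix

section

variable {R : Type*} [CommRing R]

theorem dotProduct_mulVec_comm_of_isSymm {ι : Type*} [Fintype ι] {Ω : Matrix ι ι R}
    (hΩ : Ω.IsSymm) (v w : ι → R) : v ⬝ᵥ Ω *ᵥ w = w ⬝ᵥ Ω *ᵥ v := by
  rw [dotProduct_mulVec, ← mulVec_transpose, hΩ.eq, dotProduct_comm]

/-- The Kahan–Hirota–Kimura step `(m, p) ↦ (n, q)` with time step `2ε` for `ṁ = p × Ωp`,
`ṗ = p × m`; the first Clebsch flow is the case of diagonal `Ω`. -/
structure IsClebschKHKStep (ε : R) (Ω : Matrix (Fin 3) (Fin 3) R) (m p n q : Fin 3 → R) :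
    Prop where
  sub_m : n - m = ε • (p ⨯₃ (Ω *ᵥ q) + q ⨯₃ (Ω *ᵥ p))
  sub_p : q - p = ε • (p ⨯₃ n + q ⨯₃ m)

namespace IsClebschKHKStep

variable {ε : R} {Ω : Matrix (Fin 3) (Fin 3) R} {m p n q u v : Fin 3 → R}

theorem sub_p_dotProduct (h : IsClebschKHKStep ε Ω m p n q) (w : Fin 3 → R) :
    q ⬝ᵥ w - p ⬝ᵥ w = ε * (n ⬝ᵥ w ⨯₃ p + m ⬝ᵥ w ⨯₃ q) := by
  rw [← sub_dotProduct, h.sub_p, smul_dotProduct, add_dotProduct, smul_eq_mul,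
    dotProduct_comm (p ⨯₃ n), dotProduct_comm (q ⨯₃ m), triple_product_permutation w p n,
    triple_product_permutation p n w, triple_product_permutation w q m,
    triple_product_permutation q m w]

theorem sub_m_dotProduct_cross (h : IsClebschKHKStep ε Ω m p n q) (a b : Fin 3 → R) :
    (n - m) ⬝ᵥ a ⨯₃ b = ε * (p ⬝ᵥ a * (b ⬝ᵥ Ω *ᵥ q) - p ⬝ᵥ b * (a ⬝ᵥ Ω *ᵥ q)
      + q ⬝ᵥ a * (b ⬝ᵥ Ω *ᵥ p) - q ⬝ᵥ b * (a ⬝ᵥ Ω *ᵥ p)) := by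
  rw [h.sub_m, smul_dotProduct, add_dotProduct, cross_dot_cross, cross_dot_cross, smul_eq_mul,
    dotProduct_comm (Ω *ᵥ q), dotProduct_comm (Ω *ᵥ q), dotProduct_comm (Ω *ᵥ p),
    dotProduct_comm (Ω *ᵥ p)]
  ring

theorem bilinear_fractional_integral [NoZeroDivisors R] [NeZero (2 : R)]
    (h₁ : IsClebschKHKStep ε Ω m p n q) (h₂ : IsClebschKHKStep ε Ω n q u v) (hΩ : Ω.IsSymm) :
    (p ⬝ᵥ q) * (1 + ε ^ 2 * (q ⬝ᵥ Ω *ᵥ v)) = (q ⬝ᵥ v) * (1 + ε ^ 2 * (p ⬝ᵥ Ω *ᵥ q)) := by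
  have via_ends : q ⬝ᵥ v - p ⬝ᵥ q = ε * (m ⬝ᵥ v ⨯₃ q + u ⬝ᵥ p ⨯₃ q) := by
    have h₁v := h₁.sub_p_dotProduct v
    have h₂p := h₂.sub_p_dotProduct p
    rw [← cross_anticomm v p, dotProduct_neg] at h₂p
    linear_combination h₁v + h₂p + dotProduct_comm p v + dotProduct_comm q p
  have via_middle : q ⬝ᵥ v - p ⬝ᵥ q = -ε * (n ⬝ᵥ v ⨯₃ q + n ⬝ᵥ p ⨯₃ q) := by
    have h₁q := h₁.sub_p_dotProduct q
    have h₂q := h₂.sub_p_dotProduct q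
    rw [cross_self, dotProduct_zero, ← cross_anticomm p q, dotProduct_neg] at h₁q
    rw [cross_self, dotProduct_zero, ← cross_anticomm v q, dotProduct_neg] at h₂q
    linear_combination h₁q + h₂q + dotProduct_comm q v
  have first_increment := h₁.sub_m_dotProduct_cross v q
  have second_increment := h₂.sub_m_dotProduct_cross p q
  rw [sub_dotProduct] at first_increment second_increment
  simp only [dotProduct_comm v p, dotProduct_comm v q, dotProduct_comm q p,
    dotProduct_mulVec_comm_of_isSymm hΩ v, dotProduct_mulVec_comm_of_isSymm hΩ q p]
    at first_increment second_increment
  apply mul_left_cancel₀ (two_ne_zero : (2 : R) ≠ 0)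
  linear_combination -via_ends - via_middle - ε * second_increment + ε * first_increment

end IsClebschKHKStep

end

theorem Clebsch1KHK.isClebschKHKStep {ε ω1 ω2 ω3 m1 m2 m3 p1 p2 p3 n1 n2 n3 q1 q2 q3 : ℝ}
    (h : Clebsch1KHK ε ω1 ω2 ω3 m1 m2 m3 p1 p2 p3 n1 n2 n3 q1 q2 q3) :
    IsClebschKHKStep ε (diagonal ![ω1, ω2, ω3]) ![m1, m2, m3] ![p1, p2, p3] ![n1, n2, n3]
      ![q1, q2, q3] := by
  obtain ⟨h1, h2, h3, h4, h5, h6⟩ := h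
  constructor <;> ext i <;> fin_cases i <;>
    simp only [Fin.zero_eta, Fin.mk_one, Fin.reduceFinMk, Fin.isValue, Pi.sub_apply, Pi.smul_apply,
      smul_eq_mul, cross_apply, mulVec_diagonal, cons_val_zero, cons_val_one, cons_val, add_cons,
      head_cons, tail_cons, empty_add_empty] <;>
    linarith

/-- Bilinear-fractional integral of the KHK discretization of the first Clebsch flow
(Theorem 11): `J₀ = (p₁p̃₁+p₂p̃₂+p₃p̃₃)/(1 + ε²(ω₁p₁p̃₁+ω₂p₂p̃₂+ω₃p₃p̃₃))` is conserved. -/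
theorem clebsch1_bilinear_fractional_integral
    (ε ω1 ω2 ω3 m1 m2 m3 p1 p2 p3 n1 n2 n3 q1 q2 q3 u1 u2 u3 v1 v2 v3 : ℝ)
    (hK1 : Clebsch1KHK ε ω1 ω2 ω3 m1 m2 m3 p1 p2 p3 n1 n2 n3 q1 q2 q3)
    (hK2 : Clebsch1KHK ε ω1 ω2 ω3 n1 n2 n3 q1 q2 q3 u1 u2 u3 v1 v2 v3) :
    (p1 * q1 + p2 * q2 + p3 * q3)
      * (1 + ε ^ 2 * (ω1 * q1 * v1 + ω2 * q2 * v2 + ω3 * q3 * v3))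
    = (q1 * v1 + q2 * v2 + q3 * v3)
      * (1 + ε ^ 2 * (ω1 * p1 * q1 + ω2 * p2 * q2 + ω3 * p3 * q3)) := by
  have key := hK1.isClebschKHKStep.bilinear_fractional_integral hK2.isClebschKHKStep
    (isSymm_diagonal _)
  simpa [dotProduct, mulVec_diagonal, Fin.sum_univ_three, mul_left_comm, mul_assoc] using key
end

section
/- Suppose (m,p) and (m̃,p̃) are KHK-related for the first Clebsch flow. Then c1(p)·(m̃1p1 − m1p̃1) + c2(p)·(m̃2p2 − m2p̃2) + c3(p)·(m̃3p3 − m3p̃3) = 0; that is, the discrete Wronskians Wᵢ⁽¹⁾ = m̃ᵢpᵢ − mᵢp̃ᵢ, i = 1,2,3, satisfy a linear relation with coefficients (c1(p), c2(p), c3(p)). -/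
def c1 (ε ω1 ω2 ω3 p1 p2 p3 : ℝ) : ℝ :=
  1 + ε ^ 2 * (ω1 - ω2) * p2 ^ 2 + ε ^ 2 * (ω1 - ω3) * p3 ^ 2
def c2 (ε ω1 ω2 ω3 p1 p2 p3 : ℝ) : ℝ :=
  1 + ε ^ 2 * (ω2 - ω1) * p1 ^ 2 + ε ^ 2 * (ω2 - ω3) * p3 ^ 2
def c3 (ε ω1 ω2 ω3 p1 p2 p3 : ℝ) : ℝ :=
  1 + ε ^ 2 * (ω3 - ω1) * p1 ^ 2 + ε ^ 2 * (ω3 - ω2) * p2 ^ 2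

/-- Discrete Wronskians HK basis for the first Clebsch flow (Theorem 9):
`c₁(p)(m̃₁p₁−m₁p̃₁) + c₂(p)(m̃₂p₂−m₂p̃₂) + c₃(p)(m̃₃p₃−m₃p̃₃) = 0`. -/
theorem clebsch1_first_order_wronskian_basis
    (ε ω1 ω2 ω3 m1 m2 m3 p1 p2 p3 n1 n2 n3 q1 q2 q3 : ℝ)
    (hK : Clebsch1KHK ε ω1 ω2 ω3 m1 m2 m3 p1 p2 p3 n1 n2 n3 q1 q2 q3) :
    c1 ε ω1 ω2 ω3 p1 p2 p3 * (n1 * p1 - m1 * q1)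
    + c2 ε ω1 ω2 ω3 p1 p2 p3 * (n2 * p2 - m2 * q2)
    + c3 ε ω1 ω2 ω3 p1 p2 p3 * (n3 * p3 - m3 * q3) = 0 := by
  obtain ⟨hn1, hn2, hn3, hq1, hq2, hq3⟩ := hK
  unfold c1 c2 c3
  linear_combination
    (p1 + ε * (p2 * m3 - p3 * m2)) * hn1
    + (p2 + ε * (p3 * m1 - p1 * m3)) * hn2
    + (p3 + ε * (p1 * m2 - p2 * m1)) * hn3
    - (m1 + ε * ((ω3 - ω2) * p2 * p3)) * hq1
    - (m2 + ε * ((ω1 - ω3) * p3 * p1)) * hq2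
    - (m3 + ε * ((ω2 - ω1) * p1 * p2)) * hq3
end

section
/- Suppose (m,p) and (m̃,p̃) are KHK-related for the first Clebsch flow. Then c1(p)·m̃1p1 + c2(p)·m̃2p2 + c3(p)·m̃3p3 = C1(p,p̃)·m1p1 + C2(p,p̃)·m2p2 + C3(p,p̃)·m3p3. -/
def C1 (ε ω1 ω2 ω3 p1 p2 p3 q1 q2 q3 : ℝ) : ℝ :=
  1 + ε ^ 2 * (ω2 - ω1) * p2 * q2 + ε ^ 2 * (ω3 - ω1) * p3 * q3
def C2 (ε ω1 ω2 ω3 p1 p2 p3 q1 q2 q3 : ℝ) : ℝ :=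
  1 + ε ^ 2 * (ω1 - ω2) * p1 * q1 + ε ^ 2 * (ω3 - ω2) * p3 * q3
def C3 (ε ω1 ω2 ω3 p1 p2 p3 q1 q2 q3 : ℝ) : ℝ :=
  1 + ε ^ 2 * (ω1 - ω3) * p1 * q1 + ε ^ 2 * (ω2 - ω3) * p2 * q2

namespace Clebsch1

variable {R : Type*} [CommRing R]

def pairing (ω1 ω2 ω3 p1 p2 p3 x1 x2 x3 : R) : R :=
  (ω2 - ω3) * p2 * p3 * x1 + (ω3 - ω1) * p3 * p1 * x2 + (ω1 - ω2) * p1 * p2 * x3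

theorem pairing_sub_self (ω1 ω2 ω3 p1 p2 p3 q1 q2 q3 : R) :
    pairing ω1 ω2 ω3 p1 p2 p3 (q1 - p1) (q2 - p2) (q3 - p3)
      = pairing ω1 ω2 ω3 p1 p2 p3 q1 q2 q3 := by
  unfold pairing
  ring

theorem sum_mul_sub_eq_pairing {ε ω1 ω2 ω3 m1 m2 m3 p1 p2 p3 n1 n2 n3 q1 q2 q3 : R}
    (h1 : n1 - m1 = ε * (ω3 - ω2) * (q2 * p3 + p2 * q3))
    (h2 : n2 - m2 = ε * (ω1 - ω3) * (q3 * p1 + p3 * q1))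
    (h3 : n3 - m3 = ε * (ω2 - ω1) * (q1 * p2 + p1 * q2)) :
    p1 * (n1 - m1) + p2 * (n2 - m2) + p3 * (n3 - m3)
      = ε * pairing ω1 ω2 ω3 p1 p2 p3 q1 q2 q3 := by
  rw [h1, h2, h3]
  unfold pairing
  ring

theorem mul_pairing_eq {ε ω1 ω2 ω3 m1 m2 m3 p1 p2 p3 n1 n2 n3 q1 q2 q3 : ℝ}
    (h1 : q1 - p1 = ε * (n3 * p2 + m3 * q2) - ε * (n2 * p3 + m2 * q3))
    (h2 : q2 - p2 = ε * (n1 * p3 + m1 * q3) - ε * (n3 * p1 + m3 * q1))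
    (h3 : q3 - p3 = ε * (n2 * p1 + m2 * q1) - ε * (n1 * p2 + m1 * q2)) :
    ε * pairing ω1 ω2 ω3 p1 p2 p3 q1 q2 q3
      = (C1 ε ω1 ω2 ω3 p1 p2 p3 q1 q2 q3 - 1) * (m1 * p1)
        + (C2 ε ω1 ω2 ω3 p1 p2 p3 q1 q2 q3 - 1) * (m2 * p2)
        + (C3 ε ω1 ω2 ω3 p1 p2 p3 q1 q2 q3 - 1) * (m3 * p3)
        - ((c1 ε ω1 ω2 ω3 p1 p2 p3 - 1) * (n1 * p1)
          + (c2 ε ω1 ω2 ω3 p1 p2 p3 - 1) * (n2 * p2)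
          + (c3 ε ω1 ω2 ω3 p1 p2 p3 - 1) * (n3 * p3)) := by
  rw [← pairing_sub_self, h1, h2, h3]
  unfold pairing c1 c2 c3 C1 C2 C3
  ring

end Clebsch1

/-- Identity (17) for the first Clebsch flow:
`∑ cᵢ(p) m̃ᵢpᵢ = ∑ Cᵢ(p,p̃) mᵢpᵢ` on orbits of the KHK map. -/
theorem clebsch1_identity_eq1
    (ε ω1 ω2 ω3 m1 m2 m3 p1 p2 p3 n1 n2 n3 q1 q2 q3 : ℝ)
    (hK : Clebsch1KHK ε ω1 ω2 ω3 m1 m2 m3 p1 p2 p3 n1 n2 n3 q1 q2 q3) :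
    c1 ε ω1 ω2 ω3 p1 p2 p3 * (n1 * p1)
    + c2 ε ω1 ω2 ω3 p1 p2 p3 * (n2 * p2)
    + c3 ε ω1 ω2 ω3 p1 p2 p3 * (n3 * p3)
    = C1 ε ω1 ω2 ω3 p1 p2 p3 q1 q2 q3 * (m1 * p1)
    + C2 ε ω1 ω2 ω3 p1 p2 p3 q1 q2 q3 * (m2 * p2)
    + C3 ε ω1 ω2 ω3 p1 p2 p3 q1 q2 q3 * (m3 * p3) := by
  obtain ⟨h1, h2, h3, h4, h5, h6⟩ := hK
  linear_combination Clebsch1.sum_mul_sub_eq_pairing h1 h2 h3 + Clebsch1.mul_pairing_eq h4 h5 h6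
end

section
/- Suppose (m,p) and (m̃,p̃) are KHK-related for the first Clebsch flow. Then c1(p)·m1p̃1 + c2(p)·m2p̃2 + c3(p)·m3p̃3 = C1(p,p̃)·m1p1 + C2(p,p̃)·m2p2 + C3(p,p̃)·m3p3. -/
/-!
The `p`-equations say `p̃ - p = ε (p × m̃ + p̃ × m)`, so pairing them with `m` kills the
`p̃ × m` term and leaves a triple product: `m · (p̃ - p) = ε (m̃ - m) · (m × p)`.
Substituting the `m`-equations for `m̃ - m` makes the right-hand side `ε²` times a form in
`p, p̃` weighted by differences of the `ωᵢ`, and the coefficients `cᵢ`, `Cᵢ` collect exactly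
these terms.
-/

open Matrix

theorem dotProduct_sub_eq_of_sub_eq_smul_cross {R : Type*} [CommRing R] {ε : R}
    {m n p q : Fin 3 → R} (h : q - p = ε • (p ⨯₃ n + q ⨯₃ m)) :
    m ⬝ᵥ (q - p) = ε * ((n - m) ⬝ᵥ (m ⨯₃ p)) := by
  rw [h, dotProduct_smul, dotProduct_add, dot_cross_self, triple_product_permutation,
    triple_product_permutation, sub_dotProduct, dot_self_cross, smul_eq_mul, add_zero, sub_zero]

/-- Identity (18) for the first Clebsch flow:
`∑ cᵢ(p) mᵢp̃ᵢ = ∑ Cᵢ(p,p̃) mᵢpᵢ` on orbits of the KHK map. -/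
theorem clebsch1_identity_eq2
    (ε ω1 ω2 ω3 m1 m2 m3 p1 p2 p3 n1 n2 n3 q1 q2 q3 : ℝ)
    (hK : Clebsch1KHK ε ω1 ω2 ω3 m1 m2 m3 p1 p2 p3 n1 n2 n3 q1 q2 q3) :
    c1 ε ω1 ω2 ω3 p1 p2 p3 * (m1 * q1)
    + c2 ε ω1 ω2 ω3 p1 p2 p3 * (m2 * q2)
    + c3 ε ω1 ω2 ω3 p1 p2 p3 * (m3 * q3)
    = C1 ε ω1 ω2 ω3 p1 p2 p3 q1 q2 q3 * (m1 * p1)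
    + C2 ε ω1 ω2 ω3 p1 p2 p3 q1 q2 q3 * (m2 * p2)
    + C3 ε ω1 ω2 ω3 p1 p2 p3 q1 q2 q3 * (m3 * p3) := by
  obtain ⟨hn1, hn2, hn3, hq1, hq2, hq3⟩ := hK
  have hq : ![q1, q2, q3] - ![p1, p2, p3]
      = ε • (![p1, p2, p3] ⨯₃ ![n1, n2, n3] + ![q1, q2, q3] ⨯₃ ![m1, m2, m3]) := by
    ext i
    fin_cases i <;> simp [cross_apply] <;> linarith
  have hdot := dotProduct_sub_eq_of_sub_eq_smul_cross hq
  simp only [cross_apply, dotProduct, Fin.sum_univ_three, Pi.sub_apply, cons_val_zero,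
    cons_val_one, cons_val, Fin.isValue] at hdot
  unfold c1 c2 c3 C1 C2 C3
  -- the coefficients of `hn1`, `hn2`, `hn3` are the components of `m × p`
  linear_combination hdot + ε * (m2 * p3 - m3 * p2) * hn1 + ε * (m3 * p1 - m1 * p3) * hn2
    + ε * (m1 * p2 - m2 * p1) * hn3
end

section
/- Suppose (m,p) and (m̃,p̃) are KHK-related for the Kirchhoff system. Define c1(m,p) = 1 + ε²a3(a1−a3)m3² + ε²a1(b1−b3)p3² and c3(m,p) = 2a3/a1 − 1 + ε²a1(a3−a1)(m1²+m2²) + ε²a3(b3−b1)(p1²+p2²). Then c3(m̃,p̃)·c1(m,p) = c3(m,p)·c1(m̃,p̃); that is, the quadratic-fractional function I0(m,p) = c3(m,p)/c1(m,p) is an integral of motion of the Kahan–Hirota–Kimura discretization of the Kirchhoff system. -/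
/-!
Multiplying `c₃` by `a₁` clears its only denominator, and the resulting polynomial identity
`(a₁c₃)(m̃,p̃) · c₁(m,p) = (a₁c₃)(m,p) · c₁(m̃,p̃)` lies in the ideal generated by the KHK
equations. In an explicit certificate, the `ε²` part of the multiplier of each equation is the sum
of the new and old values of its coordinate, which turns `x̃ - x` into `x̃² - x²`.
-/

/-- `(m,p)` and `(n,q)` are KHK-related for the Kirchhoff system. -/
def KirchhoffKHK (ε a1 a3 b1 b3 m1 m2 m3 p1 p2 p3 n1 n2 n3 q1 q2 q3 : ℝ) : Prop :=
  n1 - m1 = ε * (a3 - a1) * (n2 * m3 + m2 * n3) + ε * (b3 - b1) * (q2 * p3 + p2 * q3) ∧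
  n2 - m2 = ε * (a1 - a3) * (n3 * m1 + m3 * n1) + ε * (b1 - b3) * (q3 * p1 + p3 * q1) ∧
  n3 = m3 ∧
  q1 - p1 = ε * a3 * (n3 * p2 + m3 * q2) - ε * a1 * (n2 * p3 + m2 * q3) ∧
  q2 - p2 = ε * a1 * (n1 * p3 + m1 * q3) - ε * a3 * (n3 * p1 + m3 * q1) ∧
  q3 - p3 = ε * a1 * (n2 * p1 + m2 * q1 - n1 * p2 - m1 * q2)

noncomputable def kc1 (ε a1 a3 b1 b3 m3 p3 : ℝ) : ℝ :=
  1 + ε ^ 2 * a3 * (a1 - a3) * m3 ^ 2 + ε ^ 2 * a1 * (b1 - b3) * p3 ^ 2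
noncomputable def kc3 (ε a1 a3 b1 b3 m1 m2 p1 p2 : ℝ) : ℝ :=
  2 * a3 / a1 - 1 + ε ^ 2 * a1 * (a3 - a1) * (m1 ^ 2 + m2 ^ 2)
    + ε ^ 2 * a3 * (b3 - b1) * (p1 ^ 2 + p2 ^ 2)

noncomputable def kc3Num (ε a1 a3 b1 b3 m1 m2 p1 p2 : ℝ) : ℝ :=
  2 * a3 - a1 + ε ^ 2 * a1 ^ 2 * (a3 - a1) * (m1 ^ 2 + m2 ^ 2)
    + ε ^ 2 * a1 * a3 * (b3 - b1) * (p1 ^ 2 + p2 ^ 2)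

theorem kc3_eq_kc3Num_div {a1 : ℝ} (ha1 : a1 ≠ 0) (ε a3 b1 b3 m1 m2 p1 p2 : ℝ) :
    kc3 ε a1 a3 b1 b3 m1 m2 p1 p2 = kc3Num ε a1 a3 b1 b3 m1 m2 p1 p2 / a1 := by
  unfold kc3 kc3Num
  field_simp

theorem KirchhoffKHK.kc3Num_mul_kc1_eq
    {ε a1 a3 b1 b3 m1 m2 m3 p1 p2 p3 n1 n2 n3 q1 q2 q3 : ℝ}
    (hK : KirchhoffKHK ε a1 a3 b1 b3 m1 m2 m3 p1 p2 p3 n1 n2 n3 q1 q2 q3) :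
    kc3Num ε a1 a3 b1 b3 n1 n2 q1 q2 * kc1 ε a1 a3 b1 b3 m3 p3
      = kc3Num ε a1 a3 b1 b3 m1 m2 p1 p2 * kc1 ε a1 a3 b1 b3 n3 q3 := by
  obtain ⟨h1, h2, rfl, h4, h5, h6⟩ := hK
  unfold kc3Num kc1
  linear_combination
    (ε ^ 2 * a1 ^ 2 * (a3 - a1) * (n1 + m1)
      + ε ^ 3 * a1 ^ 2 * a3 * (a3 - a1) * n3 * (n2 - m2)
      + ε ^ 3 * a1 ^ 2 * a3 * (b3 - b1) * (p3 * q2 - p2 * q3)) * h1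
    + (ε ^ 2 * a1 ^ 2 * (a3 - a1) * (n2 + m2)
      - ε ^ 3 * a1 ^ 2 * a3 * (a3 - a1) * n3 * (n1 - m1)
      - ε ^ 3 * a1 ^ 2 * a3 * (b3 - b1) * (p3 * q1 - p1 * q3)) * h2
    + (ε ^ 2 * a1 * a3 * (b3 - b1) * (q1 + p1)
      + ε ^ 3 * a1 * a3 * (a3 - a1) * (b3 - b1) * n3 * (q2 - p2)
      - ε ^ 3 * a1 ^ 2 * (a3 - a1) * (b3 - b1) * (p3 * n2 - m2 * q3)) * h4
    + (ε ^ 2 * a1 * a3 * (b3 - b1) * (q2 + p2)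
      - ε ^ 3 * a1 * a3 * (a3 - a1) * (b3 - b1) * n3 * (q1 - p1)
      + ε ^ 3 * a1 ^ 2 * (a3 - a1) * (b3 - b1) * (p3 * n1 - m1 * q3)) * h5
    + ε ^ 2 * a1 * (b3 - b1) * (2 * a3 - a1) * (q3 + p3) * h6

/-- Quadratic-fractional integral `I₀ = c₃/c₁` of the KHK discretization of the
Kirchhoff system (Theorem 13). -/
theorem kirchhoff_quadratic_fractional_integral
    (ε a1 a3 b1 b3 : ℝ) (ha1 : a1 ≠ 0)
    (m1 m2 m3 p1 p2 p3 n1 n2 n3 q1 q2 q3 : ℝ)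
    (hK : KirchhoffKHK ε a1 a3 b1 b3 m1 m2 m3 p1 p2 p3 n1 n2 n3 q1 q2 q3) :
    kc3 ε a1 a3 b1 b3 n1 n2 q1 q2 * kc1 ε a1 a3 b1 b3 m3 p3
    = kc3 ε a1 a3 b1 b3 m1 m2 p1 p2 * kc1 ε a1 a3 b1 b3 n3 q3 := by
  rw [kc3_eq_kc3Num_div ha1, kc3_eq_kc3Num_div ha1, div_mul_eq_mul_div, div_mul_eq_mul_div,
    hK.kc3Num_mul_kc1_eq]
end

section
/- Fix reals a, b, c, ε. Suppose x1, x2, y1, y2, L, M ∈ ℝ satisfy y1 − x1 = εL(b·y1 + c·y2) + εM(b·x1 + c·x2) and y2 − x2 = −εL(a·y1 + b·y2) − εM(a·x1 + b·x2). Then (a·x1·y1 + b(x1·y2 + y1·x2) + c·x2·y2)·(1 + ε²(ac−b²)L²) = (a·x1² + 2b·x1·x2 + c·x2²)·(1 − ε²(ac−b²)·L·M). Consequently, on orbits of the Kahan discretization of the vector field ẋ1 = ℓ(x)(bx1+cx2), ẋ2 = −ℓ(x)(ax1+bx2) (ℓ affine), the polarized function F̂(x,ε) = (a·x1·x̃1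 + b(x1·x̃2 + x̃1·x2) + c·x2·x̃2)/(1 − ε²(ac−b²)ℓ(x)ℓ(x̃)) coincides with the known integral F(x,ε) = (a·x1² + 2b·x1·x2 + c·x2²)/(1 + ε²(ac−b²)ℓ(x)²). -/
/-!
Write the step as `(I - εL K) y = (I + εM K) x` with `K = [[b, c], [-a, -b]]`. Since `K` is
traceless with determinant `ac - b²`, `K² = -(ac - b²) I`, so applying `I + εL K` solves for `y`:
`(1 + ε²(ac - b²)L²) y = (1 - ε²(ac - b²)LM) x + ε(L + M) K x`. Pairing with `∇H(x) = A x`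
kills the last term, because `xᵀ A K x = 0` (`A K` is antisymmetric).
-/

theorem kahan_step_solve {a b c ε x1 x2 y1 y2 L M : ℝ}
    (h1 : y1 - x1 = ε * L * (b * y1 + c * y2) + ε * M * (b * x1 + c * x2))
    (h2 : y2 - x2 = -(ε * L * (a * y1 + b * y2)) - ε * M * (a * x1 + b * x2)) :
    (1 + ε ^ 2 * (a * c - b ^ 2) * L ^ 2) * y1
        = (1 - ε ^ 2 * (a * c - b ^ 2) * L * M) * x1 + ε * (L + M) * (b * x1 + c * x2) ∧
      (1 + ε ^ 2 * (a * c - b ^ 2) * L ^ 2) * y2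
        = (1 - ε ^ 2 * (a * c - b ^ 2) * L * M) * x2 - ε * (L + M) * (a * x1 + b * x2) :=
  ⟨by linear_combination (1 + ε * L * b) * h1 + ε * L * c * h2,
    by linear_combination (1 - ε * L * b) * h2 - ε * L * a * h1⟩

/-- Theorem 9 (Celledoni–McLachlan–Owren–Quispel-type identity): if
`y1 − x1 = εL(b·y1 + c·y2) + εM(b·x1 + c·x2)` and
`y2 − x2 = −εL(a·y1 + b·y2) − εM(a·x1 + b·x2)`
(the first two equations of the Kahan discretization with `L = ℓ(x)`, `M = ℓ(x̃)`),
then the polarized quadratic-fractional function coincides with the integral `F`: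
`(a·x1·y1 + b(x1·y2 + y1·x2) + c·x2·y2)(1 + ε²(ac−b²)L²)
 = (a·x1² + 2b·x1·x2 + c·x2²)(1 − ε²(ac−b²)LM)`. -/
theorem kahan_polarized_integral_coincides
    (a b c ε x1 x2 y1 y2 L M : ℝ)
    (h1 : y1 - x1 = ε * L * (b * y1 + c * y2) + ε * M * (b * x1 + c * x2))
    (h2 : y2 - x2 = -(ε * L * (a * y1 + b * y2)) - ε * M * (a * x1 + b * x2)) :
    (a * x1 * y1 + b * (x1 * y2 + y1 * x2) + c * x2 * y2)
      * (1 + ε ^ 2 * (a * c - b ^ 2) * L ^ 2)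
    = (a * x1 ^ 2 + 2 * b * x1 * x2 + c * x2 ^ 2)
      * (1 - ε ^ 2 * (a * c - b ^ 2) * L * M) := by
  obtain ⟨hy1, hy2⟩ := kahan_step_solve h1 h2
  linear_combination (a * x1 + b * x2) * hy1 + (b * x1 + c * x2) * hy2
end
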